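/- arXiv:1804.01067 — 2 statements merged into one kernel-verified Lean document; each statement's English description precedes it below -/
import Mathlib

section
/- Let ν ∈ ℂ with Re ν < 0, let f : ℝ → ℂ be measurable and bounded on [0, ∞), and let λ ∈ ℂ with Im λ > 0. Then ∫_0^∞ e^{iλx} · ((1/Γ(−ν)) ∫_0^x (x−y)^{−ν−1} f(y) dy) dx = (−iλ)^ν · ∫_0^∞ e^{iλx} f(x) dx, where (−iλ)^ν is the principal branch of the complex power. (Equivalently: the Laplace-type transform of the Riemann–Liouville fractional integral D_{0+}^ν f is (−iλ)^ν times the transform of f.) -/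
/-!
Write `b = -iλ`, so `Re b > 0` and `e^{iλx} = e^{-bx}`. The fractional integral `D_{0+}^ν f` is
the convolution on `[0, ∞)` of `f` with the kernel `t^{-ν-1} / Γ(-ν)`, and the weight `e^{-bx}`
splits over that convolution, so by Fubini the transform of `D_{0+}^ν f` is the transform of `f`
times `∫_0^∞ t^{-ν-1} e^{-bt} dt / Γ(-ν)`. This last integral equals `Γ(-ν) b^ν`: for real
`b > 0` by the substitution `u = bt`, and both sides are holomorphic in `b` on the right half-plane
(differentiate under the integral sign), so the identity theorem extends it to all `Re b > 0`.
-/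

open MeasureTheory intervalIntegral Complex Set Filter Topology

lemma norm_ofReal_cpow_mul_exp_neg_mul {t : ℝ} (ht : 0 < t) (w b : ℂ) :
    ‖(t : ℂ) ^ w * exp (-(b * t))‖ = t ^ w.re * Real.exp (-(b.re * t)) := by
  simp [norm_cpow_eq_rpow_re_of_pos ht, norm_exp]

lemma integrableOn_ofReal_cpow_mul_exp_neg_mul {w b : ℂ} (hw : -1 < w.re) (hb : 0 < b.re) :
    IntegrableOn (fun t : ℝ => (t : ℂ) ^ w * exp (-(b * t))) (Ioi 0) := by
  refine Integrable.mono' (g := fun t : ℝ => t ^ w.re * Real.exp (-b.re * t ^ (1 : ℝ)))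
    (integrableOn_rpow_mul_exp_neg_mul_rpow hw one_pos hb) (by fun_prop) ?_
  filter_upwards [ae_restrict_mem measurableSet_Ioi] with t ht
  rw [norm_ofReal_cpow_mul_exp_neg_mul ht]
  simp

lemma hasDerivAt_ofReal_cpow_mul_exp_neg_mul {t : ℝ} (ht : t ≠ 0) (w b : ℂ) :
    HasDerivAt (fun b : ℂ => (t : ℂ) ^ w * exp (-(b * t)))
      (-((t : ℂ) ^ (w + 1) * exp (-(b * t)))) b := by
  have h : HasDerivAt (fun b : ℂ => -(b * t)) (-(t : ℂ)) b := by
    simpa using ((hasDerivAt_id b).mul_const (t : ℂ)).fun_neg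
  refine (h.cexp.const_mul _).congr_deriv ?_
  rw [cpow_add _ _ (ofReal_ne_zero.mpr ht), cpow_one]
  ring

lemma sub_lt_re_of_mem_ball {b₀ b : ℂ} {r : ℝ} (hb : b ∈ Metric.ball b₀ r) :
    b₀.re - r < b.re := by
  have h := abs_re_le_norm (b - b₀)
  rw [Metric.mem_ball, dist_eq_norm] at hb
  simp only [sub_re] at h
  linarith [(abs_lt.mp (h.trans_lt hb)).1]

lemma differentiableAt_integral_ofReal_cpow_mul_exp_neg_mul {w b₀ : ℂ} (hw : -1 < w.re)
    (hb₀ : 0 < b₀.re) :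
    DifferentiableAt ℂ (fun b => ∫ t in Ioi (0 : ℝ), (t : ℂ) ^ w * exp (-(b * t))) b₀ := by
  have hr : 0 < b₀.re / 2 := by positivity
  refine (_root_.hasDerivAt_integral_of_dominated_loc_of_deriv_le (Metric.ball_mem_nhds b₀ hr)
    (F := fun b t => (t : ℂ) ^ w * exp (-(b * t)))
    (F' := fun b t => -((t : ℂ) ^ (w + 1) * exp (-(b * t))))
    (bound := fun t : ℝ => t ^ (w.re + 1) * Real.exp (-(b₀.re / 2) * t ^ (1 : ℝ)))
    (.of_forall fun b => by fun_prop) (integrableOn_ofReal_cpow_mul_exp_neg_mul hw hb₀)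
    (by fun_prop) ?_ (integrableOn_rpow_mul_exp_neg_mul_rpow (by linarith) one_pos hr)
    ?_).2.differentiableAt
  · filter_upwards [ae_restrict_mem measurableSet_Ioi] with t (ht : 0 < t) b hb
    rw [norm_neg, norm_ofReal_cpow_mul_exp_neg_mul ht, Real.rpow_one, add_re, one_re]
    gcongr
    nlinarith [sub_lt_re_of_mem_ball hb]
  · filter_upwards [ae_restrict_mem measurableSet_Ioi] with t (ht : 0 < t) b _
    exact hasDerivAt_ofReal_cpow_mul_exp_neg_mul ht.ne' w b

lemma frequently_ofReal_pos_nhdsNE_one :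
    ∃ᶠ z in 𝓝[≠] (1 : ℂ), ∃ r : ℝ, 0 < r ∧ (r : ℂ) = z := by
  have h : Tendsto ((↑) : ℝ → ℂ) (𝓝[≠] 1) (𝓝[≠] 1) :=
    tendsto_nhdsWithin_of_tendsto_nhds_of_eventually_within _
      (continuous_ofReal.tendsto' 1 1 ofReal_one |>.mono_left nhdsWithin_le_nhds)
      (eventually_nhdsWithin_of_forall fun r hr => by simpa using hr)
  exact h.frequently (((eventually_gt_nhds one_pos).filter_mono nhdsWithin_le_nhds).mono
    fun r hr => ⟨r, hr, rfl⟩).frequently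

theorem integral_ofReal_cpow_mul_exp_neg_mul_Ioi {a b : ℂ} (ha : 0 < a.re) (hb : 0 < b.re) :
    ∫ t in Ioi (0 : ℝ), (t : ℂ) ^ (a - 1) * exp (-(b * t)) = Gamma a * b ^ (-a) := by
  have hU : IsOpen {z : ℂ | 0 < z.re} := isOpen_lt continuous_const continuous_re
  have hlhs : AnalyticOnNhd ℂ (fun b => ∫ t in Ioi (0 : ℝ), (t : ℂ) ^ (a - 1) * exp (-(b * t)))
      {z | 0 < z.re} :=
    DifferentiableOn.analyticOnNhd (fun z hz =>
      (differentiableAt_integral_ofReal_cpow_mul_exp_neg_mul (by simpa) hz).differentiableWithinAt)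
      hU
  have hrhs : AnalyticOnNhd ℂ (fun b => Gamma a * b ^ (-a)) {z | 0 < z.re} :=
    DifferentiableOn.analyticOnNhd (fun z hz =>
      ((differentiableAt_id.cpow (differentiableAt_const _) (Or.inl hz)).const_mul
        _).differentiableWithinAt) hU
  have hreal : ∃ᶠ z in 𝓝[≠] (1 : ℂ),
      ∫ t in Ioi (0 : ℝ), (t : ℂ) ^ (a - 1) * exp (-(z * t)) = Gamma a * z ^ (-a) := by
    refine frequently_ofReal_pos_nhdsNE_one.mono ?_
    rintro _ ⟨r, hr, rfl⟩
    rw [integral_cpow_mul_exp_neg_mul_Ioi ha hr, mul_comm, one_div, cpow_neg,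
      inv_cpow _ _ (by rw [arg_ofReal_of_nonneg hr.le]; exact Real.pi_ne_zero.symm)]
  exact hlhs.eqOn_of_preconnected_of_frequently_eq hrhs (convex_halfSpace_re_gt 0).isPreconnected
    (by simp) hreal hb

lemma integrableOn_exp_neg_mul_mul_of_norm_le {b : ℂ} (hb : 0 < b.re) {f : ℝ → ℂ}
    (hf : AEStronglyMeasurable f (volume.restrict (Ioi 0))) {M : ℝ}
    (hfM : ∀ x, 0 < x → ‖f x‖ ≤ M) :
    IntegrableOn (fun x : ℝ => exp (-(b * x)) * f x) (Ioi 0) := by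
  refine Integrable.mul_bdd ?_ hf (c := M) ?_
  · have h := integrableOn_ofReal_cpow_mul_exp_neg_mul (w := 0) (by simp) hb
    simp only [cpow_zero, one_mul] at h
    exact h
  · filter_upwards [ae_restrict_mem measurableSet_Ioi] with x hx using hfM x hx

/-- The paper's `D_{0+}^ν f`. -/
noncomputable def riemannLiouville (ν : ℂ) (f : ℝ → ℂ) (x : ℝ) : ℂ :=
  1 / Gamma (-ν) * ∫ y in (0 : ℝ)..x, ((x - y : ℝ) : ℂ) ^ (-ν - 1) * f y

theorem integral_exp_neg_mul_mul_riemannLiouville {ν b : ℂ} (hν : ν.re < 0) (hb : 0 < b.re)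
    {f : ℝ → ℂ} (hf : IntegrableOn (fun x : ℝ => exp (-(b * x)) * f x) (Ioi 0)) :
    ∫ x in Ioi (0 : ℝ), exp (-(b * x)) * riemannLiouville ν f x =
      b ^ ν * ∫ x in Ioi (0 : ℝ), exp (-(b * x)) * f x := by
  have hν' : 0 < (-ν).re := by simpa using hν
  have hconv := integral_posConvolution hf
    (integrableOn_ofReal_cpow_mul_exp_neg_mul (w := -ν - 1) (by simpa using hν) hb)
    (ContinuousLinearMap.mul ℝ ℂ)
  simp only [ContinuousLinearMap.mul_apply', integral_ofReal_cpow_mul_exp_neg_mul_Ioi hν' hb,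
    neg_neg] at hconv
  calc ∫ x in Ioi (0 : ℝ), exp (-(b * x)) * riemannLiouville ν f x
      = 1 / Gamma (-ν) * ∫ x in Ioi (0 : ℝ), ∫ y in (0 : ℝ)..x,
          exp (-(b * y)) * f y * (((x - y : ℝ) : ℂ) ^ (-ν - 1) * exp (-(b * (x - y : ℝ)))) := by
        rw [← MeasureTheory.integral_const_mul]
        refine setIntegral_congr_fun measurableSet_Ioi fun x _ => ?_
        rw [riemannLiouville, mul_left_comm, ← intervalIntegral.integral_const_mul]
        congr 1
        refine intervalIntegral.integral_congr fun y _ => ?_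
        have hexp : exp (-(b * x)) = exp (-(b * y)) * exp (-(b * (x - y : ℝ))) := by
          rw [← exp_add]; push_cast; ring_nf
        rw [hexp]
        ring
    _ = b ^ ν * ∫ x in Ioi (0 : ℝ), exp (-(b * x)) * f x := by
        rw [hconv]
        field_simp [Gamma_ne_zero_of_re_pos hν']

/-- Laplace-type transform of the Riemann–Liouville fractional integral with
basepoint `0`: for `Re ν < 0`, `f` measurable and bounded on `[0, ∞)`, and
`Im λ > 0`, the transform of `D_{0+}^ν f` is `(-iλ)^ν f̃(λ)`. -/
theorem laplace_rl_integral (ν : ℂ) (hν : ν.re < 0) (f : ℝ → ℂ)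
    (hfm : Measurable f) (M : ℝ) (hfb : ∀ x : ℝ, 0 ≤ x → ‖f x‖ ≤ M)
    (l : ℂ) (hl : 0 < l.im) :
    ∫ x in Set.Ioi (0 : ℝ), Complex.exp (Complex.I * l * x) *
        ((1 / Complex.Gamma (-ν)) *
          ∫ y in (0 : ℝ)..x, ((x - y : ℝ) : ℂ) ^ (-ν - 1) * f y) =
      (-Complex.I * l) ^ ν *
        ∫ x in Set.Ioi (0 : ℝ), Complex.exp (Complex.I * l * x) * f x := by
  have hb : 0 < (-I * l).re := by simpa using hl
  have h := integral_exp_neg_mul_mul_riemannLiouville hν hb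
    (integrableOn_exp_neg_mul_mul_of_norm_le hb hfm.aestronglyMeasurable fun x hx => hfb x hx.le)
  simpa only [riemannLiouville, neg_mul, neg_neg] using h
end

section
/- Let n ≥ 1, let A be a finite nonempty set of multi-indices α : Fin n → ℝ with all components α_i ≥ 0, and let c : A → ℂ. Set |α| := Σ_i α_i, let ν := max_{α ∈ A} |α|, and define P, σ_P : (Fin n → ℝ) → ℂ by P(λ) = Σ_{α ∈ A} c_α · ∏_i (λ_i)^{α_i} and σ_P(λ) = Σ_{α ∈ A, |α| = ν} c_α · ∏_i (λ_i)^{α_i}, where the powers are principal complex powers of the complex coercions of λ_i. Suppose P(D) is elliptic, i.e. σ_P(λ) ≠ 0 for every λ ∈ ℝ^n with λ ≠ 0. Then there exist positive real constants C and R such that for every λ ∈ ℝ^n with ‖λ‖ > R (Euclidean norm), |P(λ)| ≥ C · (1 + ‖λ‖²)^{ν/2}. -/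
/-!
The principal symbol `σ_P` is continuous, positively homogeneous of degree `ν` and vanishes only
at the origin, so the minimum `m > 0` of `‖σ_P‖` on the unit sphere gives `‖σ_P ξ‖ ≥ m ‖ξ‖ ^ ν`.
Every other monomial of `P` has degree `< ν`, so `P - σ_P = o(‖ξ‖ ^ ν)` at infinity and
`‖P ξ‖ ≥ (m / 2) ‖ξ‖ ^ ν` for large `ξ`. Finally `(1 + ‖ξ‖ ^ 2) ^ (ν / 2) ≤ 2 ^ (ν / 2) ‖ξ‖ ^ ν`
once `‖ξ‖ ≥ 1`.
-/

open Finset Filter Asymptotics Bornology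

lemma Complex.ofReal_mul_cpow_of_pos {r : ℝ} (hr : 0 < r) (z a : ℂ) :
    ((r : ℂ) * z) ^ a = (r : ℂ) ^ a * z ^ a := by
  rcases eq_or_ne z 0 with rfl | hz
  · rcases eq_or_ne a 0 with rfl | ha
    · simp
    · simp [Complex.zero_cpow ha]
  have hr' : (r : ℂ) ≠ 0 := by exact_mod_cast hr.ne'
  rw [Complex.cpow_def_of_ne_zero (mul_ne_zero hr' hz), Complex.cpow_def_of_ne_zero hr',
    Complex.cpow_def_of_ne_zero hz, Complex.log_ofReal_mul hr hz, add_mul, Complex.exp_add,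
    ← Complex.ofReal_log hr.le]

lemma isLittleO_rpow_rpow_atTop {a b : ℝ} (hab : a < b) :
    (fun x : ℝ => x ^ a) =o[atTop] fun x => x ^ b := by
  have hpos : ∀ᶠ x : ℝ in atTop, 0 < x := eventually_gt_atTop 0
  rw [isLittleO_iff_tendsto' (hpos.mono fun x hx h => absurd h (Real.rpow_pos_of_pos hx b).ne')]
  refine (tendsto_rpow_neg_atTop (sub_pos.mpr hab)).congr' (hpos.mono fun x hx => ?_)
  rw [neg_sub, Real.rpow_sub hx]

lemma one_add_sq_rpow_le {t s : ℝ} (ht : 1 ≤ t) (hs : 0 ≤ s) :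
    (1 + t ^ 2) ^ (s / 2) ≤ 2 ^ (s / 2) * t ^ s := by
  have ht0 : 0 ≤ t := zero_le_one.trans ht
  calc (1 + t ^ 2) ^ (s / 2) ≤ (2 * t ^ 2) ^ (s / 2) :=
        Real.rpow_le_rpow (by positivity) (by nlinarith) (by positivity)
    _ = 2 ^ (s / 2) * t ^ s := by
        rw [Real.mul_rpow zero_le_two (by positivity), ← Real.rpow_natCast t 2,
          ← Real.rpow_mul ht0, Nat.cast_ofNat, mul_div_cancel₀ s two_ne_zero]

section HomogeneousLowerBound

variable {E F : Type*} [NormedAddCommGroup E] [NormedAddCommGroup F]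

theorem exists_pos_mul_norm_rpow_le_norm [NormedSpace ℝ E] [ProperSpace E] {f : E → F} {ν : ℝ}
    (hf : ContinuousOn f (Metric.sphere 0 1))
    (hhom : ∀ r : ℝ, 0 < r → ∀ x, ‖f (r • x)‖ = r ^ ν * ‖f x‖)
    (hne : ∀ x, x ≠ 0 → f x ≠ 0) :
    ∃ m : ℝ, 0 < m ∧ ∀ x, x ≠ 0 → m * ‖x‖ ^ ν ≤ ‖f x‖ := by
  have hunit : ∀ x : E, x ≠ 0 → ‖x‖⁻¹ • x ∈ Metric.sphere (0 : E) 1 := fun x hx => by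
    rw [mem_sphere_zero_iff_norm, norm_smul, norm_inv, norm_norm,
      inv_mul_cancel₀ (norm_ne_zero_iff.mpr hx)]
  obtain hempty | ⟨u, hu⟩ := (Metric.sphere (0 : E) 1).eq_empty_or_nonempty
  · exact ⟨1, one_pos, fun x hx => by simpa [hempty] using hunit x hx⟩
  obtain ⟨u₀, hu₀, hmin⟩ := (isCompact_sphere (0 : E) 1).exists_isMinOn ⟨u, hu⟩ hf.norm
  have hu₀0 : u₀ ≠ 0 := ne_zero_of_mem_unit_sphere ⟨u₀, hu₀⟩
  refine ⟨‖f u₀‖, norm_pos_iff.mpr (hne u₀ hu₀0), fun x hx => ?_⟩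
  have hx0 : 0 < ‖x‖ := norm_pos_iff.mpr hx
  calc ‖f u₀‖ * ‖x‖ ^ ν ≤ ‖f (‖x‖⁻¹ • x)‖ * ‖x‖ ^ ν :=
        mul_le_mul_of_nonneg_right (hmin (hunit x hx)) (Real.rpow_nonneg hx0.le ν)
    _ = ‖f x‖ := by rw [mul_comm, ← hhom _ hx0, smul_inv_smul₀ hx0.ne']

theorem exists_half_mul_norm_rpow_le_of_isLittleO {P σ : E → F} {m ν : ℝ} (hm : 0 < m)
    (hσ : ∀ x, x ≠ 0 → m * ‖x‖ ^ ν ≤ ‖σ x‖)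
    (hPσ : (P - σ) =o[cobounded E] fun x => ‖x‖ ^ ν) :
    ∃ R : ℝ, 0 < R ∧ ∀ x, R < ‖x‖ → m / 2 * ‖x‖ ^ ν ≤ ‖P x‖ := by
  obtain ⟨R, -, hR⟩ := (hasBasis_cobounded_norm.eventually_iff).mp
    ((hPσ.bound (half_pos hm)).and (eventually_cobounded_le_norm 1))
  refine ⟨max R 1, by positivity, fun x hx => ?_⟩
  obtain ⟨hdiff, hx1⟩ := hR (le_max_left R 1 |>.trans hx.le)
  have hx0 : x ≠ 0 := norm_pos_iff.mp (one_pos.trans_le hx1)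
  rw [Pi.sub_apply, Real.norm_of_nonneg (Real.rpow_nonneg (norm_nonneg x) ν)] at hdiff
  linarith [hσ x hx0, norm_sub_norm_le (σ x) (P x), norm_sub_rev (P x) (σ x)]

end HomogeneousLowerBound

section FracPoly

variable {ι : Type*} [Fintype ι]

noncomputable def fracMonomial (α : ι → ℝ) (ξ : EuclideanSpace ℝ ι) : ℂ :=
  ∏ i, (ξ i : ℂ) ^ (α i : ℂ)

noncomputable def fracPoly (c : (ι → ℝ) → ℂ) (S : Finset (ι → ℝ)) (ξ : EuclideanSpace ℝ ι) :
    ℂ :=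
  ∑ α ∈ S, c α * fracMonomial α ξ

lemma fracMonomial_smul {r : ℝ} (hr : 0 < r) (α : ι → ℝ) (ξ : EuclideanSpace ℝ ι) :
    fracMonomial α (r • ξ) = ((r ^ ∑ i, α i : ℝ) : ℂ) * fracMonomial α ξ := by
  simp only [fracMonomial, PiLp.smul_apply, smul_eq_mul, Complex.ofReal_mul,
    Complex.ofReal_mul_cpow_of_pos hr, prod_mul_distrib, Real.rpow_sum_of_pos hr,
    Complex.ofReal_prod, Complex.ofReal_cpow hr.le]

lemma norm_fracMonomial_le {α : ι → ℝ} (hα : ∀ i, 0 ≤ α i) (ξ : EuclideanSpace ℝ ι) :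
    ‖fracMonomial α ξ‖ ≤ ‖ξ‖ ^ ∑ i, α i := by
  rw [fracMonomial, norm_prod, Real.rpow_sum_of_nonneg (norm_nonneg ξ) fun i _ => hα i]
  refine prod_le_prod (fun i _ => norm_nonneg _) fun i _ => ?_
  rw [Complex.norm_cpow_real, Complex.norm_real]
  exact Real.rpow_le_rpow (norm_nonneg _) (PiLp.norm_apply_le ξ i) (hα i)

lemma continuous_fracMonomial {α : ι → ℝ} (hα : ∀ i, 0 ≤ α i) :
    Continuous (fracMonomial α) := by
  refine continuous_finsetProd _ fun i _ => ?_
  rcases (hα i).eq_or_lt with h0 | hpos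
  · simp only [← h0, Complex.ofReal_zero, Complex.cpow_zero]
    exact continuous_const
  · exact (Complex.continuous_ofReal_cpow_const (by simpa using hpos)).comp
      (EuclideanSpace.proj i).continuous

lemma continuous_fracPoly (c : (ι → ℝ) → ℂ) {S : Finset (ι → ℝ)}
    (hS : ∀ α ∈ S, ∀ i, 0 ≤ α i) : Continuous (fracPoly c S) :=
  continuous_finsetSum _ fun α hα => continuous_const.mul (continuous_fracMonomial (hS α hα))

lemma fracPoly_smul (c : (ι → ℝ) → ℂ) {S : Finset (ι → ℝ)} {ν : ℝ}
    (hS : ∀ α ∈ S, ∑ i, α i = ν) {r : ℝ} (hr : 0 < r) (ξ : EuclideanSpace ℝ ι) :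
    fracPoly c S (r • ξ) = ((r ^ ν : ℝ) : ℂ) * fracPoly c S ξ := by
  rw [fracPoly, fracPoly, mul_sum]
  refine sum_congr rfl fun α hα => ?_
  rw [fracMonomial_smul hr, hS α hα, mul_left_comm]

lemma fracPoly_sub_fracPoly_filter (c : (ι → ℝ) → ℂ) (S : Finset (ι → ℝ))
    (p : (ι → ℝ) → Prop) [DecidablePred p] :
    fracPoly c S - fracPoly c (S.filter p) = fracPoly c (S.filter fun α => ¬ p α) := by
  funext ξ
  rw [Pi.sub_apply, sub_eq_iff_eq_add', fracPoly, fracPoly, fracPoly,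
    sum_filter_add_sum_filter_not]

lemma isLittleO_fracPoly (c : (ι → ℝ) → ℂ) {S : Finset (ι → ℝ)} {ν : ℝ}
    (hS : ∀ α ∈ S, (∀ i, 0 ≤ α i) ∧ ∑ i, α i < ν) :
    fracPoly c S =o[cobounded (EuclideanSpace ℝ ι)] fun ξ => ‖ξ‖ ^ ν := by
  refine IsLittleO.fun_sum fun α hα => ?_
  have hmono : fracMonomial α =O[cobounded _] fun ξ : EuclideanSpace ℝ ι => ‖ξ‖ ^ ∑ i, α i :=
    IsBigO.of_norm_le (norm_fracMonomial_le (hS α hα).1)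
  exact (hmono.const_mul_left (c α)).trans_isLittleO
    ((isLittleO_rpow_rpow_atTop (hS α hα).2).comp_tendsto tendsto_norm_cobounded_atTop)

end FracPoly

theorem elliptic_operator_lower_bound_general (n : ℕ)
    (A : Finset (Fin n → ℝ)) (hA : A.Nonempty)
    (hnonneg : ∀ α ∈ A, ∀ i, 0 ≤ α i)
    (c : (Fin n → ℝ) → ℂ)
    (ν : ℝ) (hν : ν = A.sup' hA (fun α => ∑ i, α i))
    (P σP : EuclideanSpace ℝ (Fin n) → ℂ)
    (hP : ∀ ξ : EuclideanSpace ℝ (Fin n),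
      P ξ = ∑ α ∈ A, c α * ∏ i, ((ξ i : ℂ)) ^ ((α i : ℂ)))
    (hσP : ∀ ξ : EuclideanSpace ℝ (Fin n),
      σP ξ = ∑ α ∈ A.filter (fun α => ∑ i, α i = ν),
        c α * ∏ i, ((ξ i : ℂ)) ^ ((α i : ℂ)))
    (hell : ∀ ξ : EuclideanSpace ℝ (Fin n), ξ ≠ 0 → σP ξ ≠ 0) :
    ∃ C : ℝ, 0 < C ∧ ∃ R : ℝ, 0 < R ∧
      ∀ ξ : EuclideanSpace ℝ (Fin n), R < ‖ξ‖ →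
        C * (1 + ‖ξ‖ ^ 2) ^ (ν / 2) ≤ ‖P ξ‖ := by
  have hle : ∀ α ∈ A, ∑ i, α i ≤ ν := fun α hα => hν ▸ le_sup' _ hα
  have hν0 : 0 ≤ ν := by
    obtain ⟨α, hα⟩ := hA
    exact (sum_nonneg fun i _ => hnonneg α hα i).trans (hle α hα)
  obtain rfl : P = fracPoly c A := funext hP
  obtain rfl : σP = fracPoly c (A.filter fun α => ∑ i, α i = ν) := funext hσP
  obtain ⟨m, hm, hσ⟩ := exists_pos_mul_norm_rpow_le_norm
    (continuous_fracPoly c fun α hα => hnonneg α (mem_filter.mp hα).1).continuousOn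
    (fun r hr ξ => by
      rw [fracPoly_smul c (fun α hα => (mem_filter.mp hα).2) hr, norm_mul, Complex.norm_real,
        Real.norm_of_nonneg (Real.rpow_nonneg hr.le ν)])
    hell
  have hlower : (fracPoly c A - fracPoly c (A.filter fun α => ∑ i, α i = ν)) =o[cobounded _]
      fun ξ => ‖ξ‖ ^ ν := by
    rw [fracPoly_sub_fracPoly_filter]
    refine isLittleO_fracPoly c fun α hα => ?_
    obtain ⟨hαA, hαν⟩ := mem_filter.mp hα
    exact ⟨hnonneg α hαA, (hle α hαA).lt_of_ne hαν⟩
  obtain ⟨R, hR, hPR⟩ := exists_half_mul_norm_rpow_le_of_isLittleO hm hσ hlower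
  refine ⟨m / 2 / 2 ^ (ν / 2), by positivity, max R 1, by positivity, fun ξ hξ => ?_⟩
  calc m / 2 / 2 ^ (ν / 2) * (1 + ‖ξ‖ ^ 2) ^ (ν / 2)
      ≤ m / 2 / 2 ^ (ν / 2) * (2 ^ (ν / 2) * ‖ξ‖ ^ ν) :=
        mul_le_mul_of_nonneg_left (one_add_sq_rpow_le (le_of_max_le_right hξ.le) hν0)
          (by positivity)
    _ = m / 2 * ‖ξ‖ ^ ν := by field_simp
    _ ≤ ‖fracPoly c A ξ‖ := hPR ξ (lt_of_le_of_lt (le_max_left R 1) hξ)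

/-- Lemma 8 (bounds): if `P(D)` is a `ν`-th order elliptic fractional partial
differential operator, then there exist `C, R > 0` with
`|P(λ)| ≥ C (1 + |λ|²)^{ν/2}` for `|λ| > R`. -/
theorem elliptic_operator_lower_bound (n : ℕ) (hn : 1 ≤ n)
    (A : Finset (Fin n → ℝ)) (hA : A.Nonempty)
    (hnonneg : ∀ α ∈ A, ∀ i, 0 ≤ α i)
    (c : (Fin n → ℝ) → ℂ)
    (ν : ℝ) (hν : ν = A.sup' hA (fun α => ∑ i, α i))
    (P σP : EuclideanSpace ℝ (Fin n) → ℂ)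
    (hP : ∀ ξ : EuclideanSpace ℝ (Fin n),
      P ξ = ∑ α ∈ A, c α * ∏ i, ((ξ i : ℂ)) ^ ((α i : ℂ)))
    (hσP : ∀ ξ : EuclideanSpace ℝ (Fin n),
      σP ξ = ∑ α ∈ A.filter (fun α => ∑ i, α i = ν),
        c α * ∏ i, ((ξ i : ℂ)) ^ ((α i : ℂ)))
    (hell : ∀ ξ : EuclideanSpace ℝ (Fin n), ξ ≠ 0 → σP ξ ≠ 0) :
    ∃ C : ℝ, 0 < C ∧ ∃ R : ℝ, 0 < R ∧
      ∀ ξ : EuclideanSpace ℝ (Fin n), R < ‖ξ‖ →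
        C * (1 + ‖ξ‖ ^ 2) ^ (ν / 2) ≤ ‖P ξ‖ :=
  elliptic_operator_lower_bound_general n A hA hnonneg c ν hν P σP hP hσP hell
end
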